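/- arXiv:1808.00389 — 5 statements merged into one kernel-verified Lean document; each statement's English description precedes it below -/
import Mathlib

section
/- Let G be a graph, let F ⊆ G be a path-forest, and let J ⊆ V(F) be the set of vertices of F having degree at most one in F. Let x ∈ V(G) \ V(F) be a vertex with at least 3 neighbours (in G) inside J. Then there exist vertices j₁, j₂ ∈ V(F) such that the graph obtained from F by adding the two edges x j₁ and x j₂ is again a path-forest. -/
/-!
In a graph of maximum degree at most two, a path between two vertices of degree at most one
uses up the degree of each of its vertices, so it is a whole connected component; hence no
component contains three vertices of degree at most one. Of three neighbours of `x` in `J`, two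
therefore lie in different components of `F`, and joining `x`, which is isolated in `F`, to both
of them creates neither a cycle nor a vertex of degree three.
-/

/-- A path-forest: a subgraph (with vertex set `F.verts`, possibly containing isolated
vertices) which contains no cycle and has maximum degree at most `2`. -/
def IsPathForest {V : Type*} {G : SimpleGraph V} (F : G.Subgraph) : Prop :=
  F.spanningCoe.IsAcyclic ∧ ∀ v, (F.neighborSet v).encard ≤ 2

namespace SimpleGraph

variable {V : Type*} {H : SimpleGraph V} {u v w : V}

theorem Reachable.mem_of_forall_adj {S : Set V} (hS : ∀ a b, H.Adj a b → a ∈ S → b ∈ S)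
    (h : H.Reachable u w) (hu : u ∈ S) : w ∈ S := by
  obtain ⟨p⟩ := h
  induction p with
  | nil => exact hu
  | cons hab _ ih => exact ih (hS _ _ hab hu)

theorem Reachable.of_sup_edge {a b : V} (h : (H ⊔ edge a b).Reachable u w) :
    H.Reachable u w ∨ H.Reachable u a ∨ H.Reachable u b := by
  refine h.mem_of_forall_adj (S := {z | H.Reachable u z ∨ H.Reachable u a ∨ H.Reachable u b})
    ?_ (Or.inl .rfl)
  rintro c d (hcd | hcd) hc
  · exact hc.imp_left (·.trans hcd.reachable)
  · grind

theorem neighborSet_sup_edge_of_ne {a b z : V} (hza : z ≠ a) (hzb : z ≠ b) :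
    (H ⊔ edge a b).neighborSet z = H.neighborSet z := by
  ext w
  simp [edge_adj, hza, hzb]

theorem encard_neighborSet_sup_edge_le (a b z : V) :
    ((H ⊔ edge a b).neighborSet z).encard ≤ (H.neighborSet z).encard + 1 := by
  rw [neighborSet_sup]
  refine (Set.encard_union_le _ _).trans ?_
  gcongr
  rw [Set.encard_le_one_iff]
  simp only [mem_neighborSet, edge_adj]
  grind

theorem encard_neighborSet_sup_edge_le_two (hH : ∀ z, (H.neighborSet z).encard ≤ 2) {a b : V}
    (ha : (H.neighborSet a).encard ≤ 1) (hb : (H.neighborSet b).encard ≤ 1) (z : V) :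
    ((H ⊔ edge a b).neighborSet z).encard ≤ 2 := by
  by_cases hz : z = a ∨ z = b
  · have hz1 : (H.neighborSet z).encard ≤ 1 := by rcases hz with rfl | rfl <;> assumption
    calc _ ≤ (H.neighborSet z).encard + 1 := encard_neighborSet_sup_edge_le a b z
      _ ≤ 1 + 1 := by gcongr
      _ = 2 := one_add_one_eq_two
  · push Not at hz
    rw [neighborSet_sup_edge_of_ne hz.1 hz.2]
    exact hH z

namespace Walk.IsPath

variable {p : H.Walk u v}

theorem encard_neighborSet_toSubgraph_of_ne (hp : p.IsPath) (hw : w ∈ p.support) (hwu : w ≠ u)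
    (hwv : w ≠ v) : (p.toSubgraph.neighborSet w).encard = 2 := by
  obtain ⟨i, rfl, hi⟩ := Walk.mem_support_iff_exists_getVert.mp hw
  have hi0 : i ≠ 0 := by rintro rfl; exact hwu p.getVert_zero
  have hil : i < p.length := hi.lt_of_ne (by rintro rfl; exact hwv p.getVert_length)
  rw [← p.finite_neighborSet_toSubgraph.cast_ncard_eq,
    hp.ncard_neighborSet_toSubgraph_internal_eq_two hi0 hil]
  rfl

theorem mem_support_of_adj {z : V} (hH : ∀ z, (H.neighborSet z).encard ≤ 2) (hp : p.IsPath)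
    (huv : u ≠ v) (hu : (H.neighborSet u).encard ≤ 1) (hv : (H.neighborSet v).encard ≤ 1)
    (hw : w ∈ p.support) (hwz : H.Adj w z) : z ∈ p.support := by
  -- `p` already spends the whole degree budget of `w`, so `z` is a neighbour of `w` along `p`.
  have hnil : ¬ p.Nil := fun h ↦ huv h.eq
  have hle : (H.neighborSet w).encard ≤ (p.toSubgraph.neighborSet w).encard := by
    by_cases hwu : w = u
    · subst hwu
      rwa [hp.neighborSet_toSubgraph_startpoint hnil, Set.encard_singleton]
    by_cases hwv : w = v
    · subst hwv
      rwa [hp.neighborSet_toSubgraph_endpoint hnil, Set.encard_singleton]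
    rw [hp.encard_neighborSet_toSubgraph_of_ne hw hwu hwv]
    exact hH w
  rw [← mem_neighborSet, ← p.finite_neighborSet_toSubgraph.eq_of_subset_of_encard_le
    (p.toSubgraph.neighborSet_subset w) hle] at hwz
  exact p.mem_verts_toSubgraph.mp (p.toSubgraph.edge_vert hwz.symm)

end Walk.IsPath

theorem eq_or_eq_of_reachable_of_encard_neighborSet_le_one
    (hH : ∀ z, (H.neighborSet z).encard ≤ 2) (huv : u ≠ v)
    (hu : (H.neighborSet u).encard ≤ 1) (hv : (H.neighborSet v).encard ≤ 1)
    (hw : (H.neighborSet w).encard ≤ 1) (hreach : H.Reachable u v) (h : H.Reachable u w) :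
    w = u ∨ w = v := by
  classical
  obtain ⟨q⟩ := hreach
  have hp := q.bypass_isPath
  have hw_mem : w ∈ q.bypass.support := h.mem_of_forall_adj (S := {z | z ∈ q.bypass.support})
    (fun _ _ hab ha ↦ hp.mem_support_of_adj hH huv hu hv ha hab) q.bypass.start_mem_support
  by_contra! hne
  have := (hp.encard_neighborSet_toSubgraph_of_ne hw_mem hne.1 hne.2).symm.trans_le
    ((Set.encard_le_encard (q.bypass.toSubgraph.neighborSet_subset w)).trans hw)
  norm_num at this

theorem exists_not_reachable_of_three_le_encard (hH : ∀ z, (H.neighborSet z).encard ≤ 2)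
    {s : Set V} (hs : 3 ≤ s.encard) (hleaf : ∀ v ∈ s, (H.neighborSet v).encard ≤ 1) :
    ∃ a ∈ s, ∃ b ∈ s, a ≠ b ∧ ¬H.Reachable a b := by
  obtain ⟨t, hts, ht⟩ := Set.exists_subset_encard_eq hs
  obtain ⟨y₁, y₂, y₃, h₁₂, h₁₃, h₂₃, rfl⟩ := Set.encard_eq_three.mp ht
  have hy : y₁ ∈ s ∧ y₂ ∈ s ∧ y₃ ∈ s := by simp_all [Set.insert_subset_iff]
  by_contra! hreach
  have := eq_or_eq_of_reachable_of_encard_neighborSet_le_one hH h₁₂ (hleaf _ hy.1)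
    (hleaf _ hy.2.1) (hleaf _ hy.2.2)
    (hreach _ hy.1 _ hy.2.1 h₁₂) (hreach _ hy.1 _ hy.2.2 h₁₃)
  grind

def IsLinearForest (H : SimpleGraph V) : Prop :=
  H.IsAcyclic ∧ ∀ v, (H.neighborSet v).encard ≤ 2

theorem IsLinearForest.sup_edge (hH : H.IsLinearForest) {a b : V}
    (ha : (H.neighborSet a).encard ≤ 1) (hb : (H.neighborSet b).encard ≤ 1)
    (hab : ¬H.Reachable a b) : (H ⊔ edge a b).IsLinearForest :=
  ⟨hH.1.sup_edge_of_not_reachable hab, encard_neighborSet_sup_edge_le_two hH.2 ha hb⟩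

theorem IsLinearForest.sup_edge_sup_edge (hH : H.IsLinearForest) {x j₁ j₂ : V}
    (hx : H.neighborSet x = ∅) (hxj₁ : x ≠ j₁) (hxj₂ : x ≠ j₂)
    (h₁ : (H.neighborSet j₁).encard ≤ 1) (h₂ : (H.neighborSet j₂).encard ≤ 1)
    (hreach : ¬H.Reachable j₁ j₂) : (H ⊔ edge x j₁ ⊔ edge x j₂).IsLinearForest := by
  have hj₂j₁ : j₂ ≠ j₁ := fun h ↦ hreach (h ▸ .rfl)
  refine (hH.sup_edge (by simp [hx]) h₁
    (not_reachable_of_neighborSet_left_eq_empty hxj₁ hx)).sup_edge ?_ ?_ ?_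
  · exact (encard_neighborSet_sup_edge_le x j₁ x).trans (by simp [hx])
  · rwa [neighborSet_sup_edge_of_ne hxj₂.symm hj₂j₁]
  · intro h
    rcases h.symm.of_sup_edge with h | h | h
    · exact not_reachable_of_neighborSet_right_eq_empty hxj₂.symm hx h
    · exact not_reachable_of_neighborSet_right_eq_empty hxj₂.symm hx h
    · exact hreach h.symm

end SimpleGraph

open SimpleGraph

theorem isPathForest_iff_isLinearForest {V : Type*} {G : SimpleGraph V} {F : G.Subgraph} :
    IsPathForest F ↔ F.spanningCoe.IsLinearForest :=
  Iff.rfl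

/-- Let `F ⊆ G` be a path-forest, `J ⊆ V(F)` the set of vertices of degree at most one
in `F`, and let `x ∈ V(G) \ V(F)` have at least `3` neighbours (in `G`) inside `J`.
Then there are `j₁, j₂ ∈ V(F)` such that adding the two edges `x j₁` and `x j₂` to `F`
yields again a path-forest. -/
theorem pathForest_extend_forward {V : Type*} {G : SimpleGraph V} (F : G.Subgraph)
    (hF : IsPathForest F) (x : V) (hx : x ∉ F.verts)
    (hdeg : 3 ≤ (G.neighborSet x ∩
      {v | v ∈ F.verts ∧ (F.neighborSet v).encard ≤ 1}).encard) :
    ∃ j₁ j₂ : V, j₁ ∈ F.verts ∧ j₂ ∈ F.verts ∧ j₁ ≠ j₂ ∧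
      ∃ F' : G.Subgraph,
        F'.verts = insert x F.verts ∧
        (∀ a b, F'.Adj a b ↔ (F.Adj a b ∨ s(a, b) = s(x, j₁) ∨ s(a, b) = s(x, j₂))) ∧
        IsPathForest F' := by
  rw [isPathForest_iff_isLinearForest] at hF
  obtain ⟨j₁, ⟨hxj₁ : G.Adj x j₁, hj₁, hj₁leaf⟩, j₂, ⟨hxj₂ : G.Adj x j₂, hj₂, hj₂leaf⟩, hne,
    hreach⟩ := exists_not_reachable_of_three_le_encard hF.2 hdeg fun v hv ↦ hv.2.2
  have hxF : F.spanningCoe.neighborSet x = ∅ :=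
    Set.eq_empty_of_forall_notMem fun w hw ↦ hx (F.edge_vert hw)
  refine ⟨j₁, j₂, hj₁, hj₂, hne, F ⊔ G.subgraphOfAdj hxj₁ ⊔ G.subgraphOfAdj hxj₂, ?_, ?_, ?_⟩
  · ext v
    simp only [Subgraph.verts_sup, subgraphOfAdj_verts]
    grind
  · intro a b
    simp only [Subgraph.sup_adj, subgraphOfAdj, or_assoc, eq_comm]
  · have hspan : (F ⊔ G.subgraphOfAdj hxj₁ ⊔ G.subgraphOfAdj hxj₂).spanningCoe =
        F.spanningCoe ⊔ edge x j₁ ⊔ edge x j₂ := by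
      simp only [Subgraph.sup_spanningCoe, Subgraph.spanningCoe_subgraphOfAdj, edge]
    rw [isPathForest_iff_isLinearForest, hspan]
    exact hF.sup_edge_sup_edge hxF hxj₁.ne hxj₂.ne hj₁leaf hj₂leaf hreach
end

section
/- Let τ₁, τ₂ > 0 and c₀ ≥ 0 be real numbers, and let s₀, s₁, s₂, … be a strictly increasing sequence of non-negative integers. Suppose there exists n₀ such that for every n ≥ n₀ one has s_{n+1} ≤ τ₁·s_n − τ₂·s_{n−1} + c₀. Then τ₁² ≥ 4·τ₂. -/
/-!
If `τ₁² < 4 τ₂`, put `δ = 2 √τ₂ - τ₁ > 0`. Dividing the recurrence by `s_{n+1}` and using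
`r + τ₂ / r ≥ 2 √τ₂` for the ratio `r_n = s_{n+1} / s_n` gives `r_{n+1} ≤ r_n - δ + c₀ / s_{n+1}`.
As `s_n → ∞`, the ratios eventually drop by at least `δ / 2` per step, so they become negative.
-/

open Filter

lemma tendsto_atBot_of_eventually_le_sub {r : ℕ → ℝ} {ε : ℝ} (hε : 0 < ε)
    (h : ∀ᶠ n in atTop, r (n + 1) ≤ r n - ε) : Tendsto r atTop atBot := by
  obtain ⟨N, hN⟩ := eventually_atTop.mp h
  have hdrop : ∀ k : ℕ, r (k + N) ≤ r N - k * ε := by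
    intro k
    induction k with
    | zero => simp
    | succ k ih =>
      have := hN (k + N) (Nat.le_add_left N k)
      rw [Nat.succ_add]
      push_cast
      linarith
  rw [← tendsto_add_atTop_iff_nat N]
  refine tendsto_atBot_mono hdrop (tendsto_atBot_add_const_left _ _ ?_)
  exact tendsto_neg_atTop_atBot.comp (tendsto_natCast_atTop_atTop.atTop_mul_const hε)

lemma two_sqrt_le_div_add_mul_div {t a b : ℝ} (ht : 0 ≤ t) (ha : 0 < a) (hb : 0 < b) :
    2 * √t ≤ b / a + t * (a / b) := by
  have hsq : (b - √t * a) ^ 2 = b * b + a * (t * a) - 2 * √t * (a * b) := by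
    linear_combination a ^ 2 * Real.sq_sqrt ht
  rw [mul_div_assoc', div_add_div _ _ ha.ne' hb.ne', le_div_iff₀ (mul_pos ha hb)]
  linarith [sq_nonneg (b - √t * a)]

lemma div_le_div_sub_add_of_le_recurrence {τ₁ τ₂ c₀ a b c : ℝ} (hτ₂ : 0 ≤ τ₂) (ha : 0 < a)
    (hb : 0 < b) (hc : c ≤ τ₁ * b - τ₂ * a + c₀) :
    c / b ≤ b / a - (2 * √τ₂ - τ₁) + c₀ / b := by
  have hamgm := two_sqrt_le_div_add_mul_div hτ₂ ha hb
  have hdiv : c / b ≤ τ₁ - τ₂ * (a / b) + c₀ / b := by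
    calc c / b ≤ (τ₁ * b - τ₂ * a + c₀) / b := div_le_div_of_nonneg_right hc hb.le
      _ = τ₁ - τ₂ * (a / b) + c₀ / b := by field_simp
  linarith

theorem difference_inequality_general (τ₁ τ₂ c₀ : ℝ) (s : ℕ → ℕ) (hs : StrictMono s)
    (h : ∃ n₀ : ℕ, ∀ n ≥ n₀,
      (s (n + 1) : ℝ) ≤ τ₁ * s n - τ₂ * s (n - 1) + c₀) :
    4 * τ₂ ≤ τ₁ ^ 2 := by
  by_contra! hlt
  obtain ⟨n₀, hrec⟩ := h
  have hτ₂ : 0 ≤ τ₂ := by nlinarith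
  have hδ : 0 < 2 * √τ₂ - τ₁ := by nlinarith [Real.sq_sqrt hτ₂, Real.sqrt_nonneg τ₂]
  have hs_pos : ∀ n ≥ 1, (0 : ℝ) < s n := fun n hn => by
    exact_mod_cast (Nat.zero_le _).trans_lt (hs hn)
  have hc_small : ∀ᶠ n in atTop, c₀ / s (n + 1) < (2 * √τ₂ - τ₁) / 2 :=
    (tendsto_const_nhds.div_atTop (tendsto_natCast_atTop_atTop.comp
      (hs.tendsto_atTop.comp (tendsto_add_atTop_nat 1)))).eventually (gt_mem_nhds (half_pos hδ))
  have hratio : Tendsto (fun n => (s (n + 1) : ℝ) / s n) atTop atBot := by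
    refine tendsto_atBot_of_eventually_le_sub (half_pos hδ) ?_
    filter_upwards [hc_small, eventually_ge_atTop n₀, eventually_ge_atTop 1] with n hc hn₀ hn
    have := div_le_div_sub_add_of_le_recurrence hτ₂ (hs_pos n hn) (hs_pos (n + 1) (by omega))
      (by simpa using hrec (n + 1) (by omega))
    linarith
  obtain ⟨n, hn⟩ := (hratio.eventually (eventually_lt_atBot 0)).exists
  exact hn.not_ge (by positivity)

/-- If `τ₁, τ₂ > 0`, `c₀ ≥ 0` and `(s_n)` is a strictly increasing sequence of
non-negative integers with `s_{n+1} ≤ τ₁ s_n − τ₂ s_{n−1} + c₀` for all large `n`,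
then `τ₁² ≥ 4 τ₂`. -/
theorem difference_inequality (τ₁ τ₂ c₀ : ℝ) (hτ₁ : 0 < τ₁) (hτ₂ : 0 < τ₂)
    (hc₀ : 0 ≤ c₀) (s : ℕ → ℕ) (hs : StrictMono s)
    (h : ∃ n₀ : ℕ, ∀ n ≥ n₀,
      (s (n + 1) : ℝ) ≤ τ₁ * s n - τ₂ * s (n - 1) + c₀) :
    4 * τ₂ ≤ τ₁ ^ 2 :=
  difference_inequality_general τ₁ τ₂ c₀ s hs h
end

section
/- Let ρ₁, ρ₂ > 0 be real numbers with ρ₁² < 4·ρ₂. Then there is no strictly increasing sequence s₀, s₁, s₂, … of positive real numbers for which there exists n₁ such that s_{n+1} ≤ ρ₁·s_n − ρ₂·s_{n−1} holds for all n ≥ n₁. -/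
/-!
The ratios `t n = s (n + 1) / s n` of a positive solution satisfy
`t (n + 1) ≤ t n - c / t n` with `c = ρ₂ - ρ₁² / 4 > 0`, by completing the square
`ρ₁ s_n s_{n-1} ≤ s_n² + (ρ₁² / 4) s_{n-1}²`. Such a sequence decreases, hence falls
by at least `c / t n₁` at every step, and so cannot stay positive.
-/

lemma div_le_div_sub_of_le_mul_sub_mul {ρ₁ ρ₂ a b x : ℝ} (ha : 0 < a) (hb : 0 < b)
    (hx : x ≤ ρ₁ * b - ρ₂ * a) :
    x / b ≤ b / a - (ρ₂ - ρ₁ ^ 2 / 4) / (b / a) := by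
  have hsq : x * a ≤ b ^ 2 - (ρ₂ - ρ₁ ^ 2 / 4) * a ^ 2 := by
    nlinarith [mul_le_mul_of_nonneg_right hx ha.le, sq_nonneg (b - ρ₁ / 2 * a)]
  rw [div_div_eq_mul_div, div_sub_div _ _ ha.ne' hb.ne', div_le_div_iff₀ hb (mul_pos ha hb)]
  nlinarith [mul_le_mul_of_nonneg_right hsq hb.le]

lemma le_sub_mul_of_le_sub {t : ℕ → ℝ} {d : ℝ} (h : ∀ n, t (n + 1) ≤ t n - d) (k : ℕ) :
    t k ≤ t 0 - k * d := by
  induction k with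
  | zero => simp
  | succ k ih =>
    push_cast
    linarith [h k]

lemma exists_nonpos_of_le_sub_div {t : ℕ → ℝ} {c : ℝ} (hc : 0 < c)
    (h : ∀ n, t (n + 1) ≤ t n - c / t n) : ∃ n, t n ≤ 0 := by
  by_contra! hpos
  have hanti : Antitone t := antitone_nat_of_succ_le fun n => by
    linarith [h n, div_pos hc (hpos n)]
  have hstep : ∀ n, t (n + 1) ≤ t n - c / t 0 := fun n => by
    linarith [h n, div_le_div_of_nonneg_left hc.le (hpos n) (hanti (Nat.zero_le n))]
  have hd : 0 < c / t 0 := div_pos hc (hpos 0)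
  obtain ⟨k, hk⟩ := exists_nat_gt (t 0 / (c / t 0))
  rw [div_lt_iff₀ hd] at hk
  linarith [le_sub_mul_of_le_sub hstep k, hpos k]

theorem no_constrained_growth_general (ρ₁ ρ₂ : ℝ)
    (h : ρ₁ ^ 2 < 4 * ρ₂) :
    ¬ ∃ s : ℕ → ℝ, (∀ n, 0 < s n) ∧ StrictMono s ∧
      ∃ n₁ : ℕ, ∀ n ≥ n₁, s (n + 1) ≤ ρ₁ * s n - ρ₂ * s (n - 1) := by
  rintro ⟨s, hpos, -, n₁, hrec⟩
  have hc : 0 < ρ₂ - ρ₁ ^ 2 / 4 := by linarith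
  obtain ⟨k, hk⟩ := exists_nonpos_of_le_sub_div (t := fun k => s (n₁ + k + 1) / s (n₁ + k)) hc
    fun k => div_le_div_sub_of_le_mul_sub_mul (hpos _) (hpos _)
      (hrec (n₁ + k + 1) (by omega))
  exact (div_pos (hpos _) (hpos _)).not_ge hk

/-- If `ρ₁, ρ₂ > 0` satisfy `ρ₁² < 4 ρ₂`, then there is no strictly increasing sequence
of positive reals satisfying `s_{n+1} ≤ ρ₁ s_n − ρ₂ s_{n−1}` for all large `n`. -/
theorem no_constrained_growth (ρ₁ ρ₂ : ℝ) (hρ₁ : 0 < ρ₁) (hρ₂ : 0 < ρ₂)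
    (h : ρ₁ ^ 2 < 4 * ρ₂) :
    ¬ ∃ s : ℕ → ℝ, (∀ n, 0 < s n) ∧ StrictMono s ∧
      ∃ n₁ : ℕ, ∀ n ≥ n₁, s (n + 1) ≤ ρ₁ * s n - ρ₂ * s (n - 1) :=
  no_constrained_growth_general ρ₁ ρ₂ h
end

section
/- Let the edges of the complete graph K_ℕ on vertex set ℕ be 2-coloured with red and blue. Suppose ℕ \ S, for some finite set S ⊆ ℕ, is partitioned into pairwise disjoint sets X₁, X₂, X₃ such that X₁ and X₂ are infinite and every edge with endpoints in two distinct sets among X₁, X₂, X₃ is blue. Then there exists an infinite blue path whose vertex set is exactly X₁ ∪ X₂ ∪ X₃ = ℕ \ S. -/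
/-! Only the blue edges between `X₁` and `X₂ ∪ X₃` are needed. Both sets are infinite, so
enumerating each of them and interleaving the two enumerations gives a path that alternates
between them and visits every vertex of `X₁ ∪ X₂ ∪ X₃` exactly once. -/

open Function Set

namespace Nat

variable {α : Type*}

/-- The sequence `a 0, b 0, a 1, b 1, …`. -/
def interleave (a b : ℕ → α) : ℕ → α :=
  Sum.elim a b ∘ Equiv.natSumNatEquivNat.symm

@[simp]
theorem interleave_two_mul (a b : ℕ → α) (n : ℕ) : interleave a b (2 * n) = a n := by
  simp [interleave]

@[simp]
theorem interleave_two_mul_add_one (a b : ℕ → α) (n : ℕ) :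
    interleave a b (2 * n + 1) = b n := by
  simp [interleave]

theorem interleave_injective {a b : ℕ → α} (ha : Injective a) (hb : Injective b)
    (hab : ∀ m n, a m ≠ b n) : Injective (interleave a b) :=
  (ha.sumElim hb hab).comp Equiv.natSumNatEquivNat.symm.injective

theorem range_interleave (a b : ℕ → α) : range (interleave a b) = range a ∪ range b := by
  rw [interleave, range_comp, Equiv.range_eq_univ, image_univ, Sum.elim_range]

theorem interleave_rel_succ {r : α → α → Prop} (hr : ∀ x y, r x y → r y x) {a b : ℕ → α}
    (hab : ∀ m n, r (a m) (b n)) (i : ℕ) : r (interleave a b i) (interleave a b (i + 1)) := by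
  obtain ⟨n, rfl | rfl⟩ := i.even_or_odd'
  · simpa using hab n n
  · simpa [show 2 * n + 1 + 1 = 2 * (n + 1) by ring] using hr _ _ (hab (n + 1) n)

end Nat

theorem Set.Infinite.exists_injective_range_eq {α : Type*} [Countable α] {A : Set α}
    (hA : A.Infinite) : ∃ a : ℕ → α, Injective a ∧ range a = A := by
  have := hA.to_subtype
  obtain ⟨_⟩ := nonempty_denumerable A
  let e : ℕ ≃ A := (Denumerable.eqv A).symm
  refine ⟨Subtype.val ∘ e, Subtype.val_injective.comp e.injective, ?_⟩
  rw [range_comp, e.range_eq_univ, image_univ, Subtype.range_val]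

theorem exists_spanning_blue_path_of_complete_bipartite {α : Type*} [Countable α]
    (c : α → α → Bool) (hsymm : ∀ x y, c x y = c y x) {A B : Set α}
    (hA : A.Infinite) (hB : B.Infinite) (hAB : Disjoint A B)
    (hblue : ∀ x ∈ A, ∀ y ∈ B, c x y = false) :
    ∃ v : ℕ → α, Injective v ∧ (∀ i, c (v i) (v (i + 1)) = false) ∧ range v = A ∪ B := by
  obtain ⟨a, ha, rfl⟩ := hA.exists_injective_range_eq
  obtain ⟨b, hb, rfl⟩ := hB.exists_injective_range_eq
  have hab : ∀ m n, a m ≠ b n := fun m n => hAB.ne_of_mem (mem_range_self m) (mem_range_self n)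
  have hblue_ab : ∀ m n, c (a m) (b n) = false := fun m n => hblue _ ⟨m, rfl⟩ _ ⟨n, rfl⟩
  exact ⟨Nat.interleave a b, Nat.interleave_injective ha hb hab,
    Nat.interleave_rel_succ (r := fun x y => c x y = false) (fun x y h => hsymm x y ▸ h) hblue_ab,
    Nat.range_interleave a b⟩

theorem blue_path_spanning_complement_general
    (c : ℕ → ℕ → Bool) (hsymm : ∀ x y, c x y = c y x)
    (X₁ X₂ X₃ : Set ℕ)
    (h12 : Disjoint X₁ X₂) (h13 : Disjoint X₁ X₃)
    (h1 : X₁.Infinite) (h2 : X₂.Infinite)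
    (hblue : ∀ x y : ℕ,
      ((x ∈ X₁ ∧ y ∈ X₂) ∨ (x ∈ X₁ ∧ y ∈ X₃) ∨ (x ∈ X₂ ∧ y ∈ X₃)) → c x y = false) :
    ∃ v : ℕ → ℕ, Function.Injective v ∧ (∀ i, c (v i) (v (i + 1)) = false) ∧
      Set.range v = X₁ ∪ X₂ ∪ X₃ := by
  rw [union_assoc]
  refine exists_spanning_blue_path_of_complete_bipartite c hsymm h1
    (h2.mono subset_union_left) (disjoint_union_right.mpr ⟨h12, h13⟩) ?_
  rintro x hx y (hy | hy)
  · exact hblue x y (Or.inl ⟨hx, hy⟩)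
  · exact hblue x y (Or.inr (Or.inl ⟨hx, hy⟩))

/-- Suppose the edges of `K_ℕ` are 2-coloured (red = `true`, blue = `false`), and
`ℕ \ S`, for a finite `S`, is partitioned into pairwise disjoint sets `X₁, X₂, X₃`
with `X₁, X₂` infinite, such that every edge between two distinct sets among
`X₁, X₂, X₃` is blue. Then there is an infinite blue path whose vertex set is exactly
`X₁ ∪ X₂ ∪ X₃ = ℕ \ S`. -/
theorem blue_path_spanning_complement
    (c : ℕ → ℕ → Bool) (hsymm : ∀ x y, c x y = c y x)
    (S : Finset ℕ) (X₁ X₂ X₃ : Set ℕ)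
    (hpart : X₁ ∪ X₂ ∪ X₃ = (↑S : Set ℕ)ᶜ)
    (h12 : Disjoint X₁ X₂) (h13 : Disjoint X₁ X₃) (h23 : Disjoint X₂ X₃)
    (h1 : X₁.Infinite) (h2 : X₂.Infinite)
    (hblue : ∀ x y : ℕ,
      ((x ∈ X₁ ∧ y ∈ X₂) ∨ (x ∈ X₁ ∧ y ∈ X₃) ∨ (x ∈ X₂ ∧ y ∈ X₃)) → c x y = false) :
    ∃ v : ℕ → ℕ, Function.Injective v ∧ (∀ i, c (v i) (v (i + 1)) = false) ∧
      Set.range v = X₁ ∪ X₂ ∪ X₃ :=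
  blue_path_spanning_complement_general c hsymm X₁ X₂ X₃ h12 h13 h1 h2 hblue
end

section
/- Consider a 2-edge-colouring of K_ℕ. Suppose there exist two red vertices x₁, x₂ ∈ ℕ and a finite subset S of ℕ \ {x₁, x₂} such that K_ℕ \ S contains no red path between x₁ and x₂ (i.e. no finite path with all edges red, all vertices outside S, joining x₁ and x₂). Then there exists a monochromatic infinite path P whose vertex set has upper density equal to 1. -/
/-!
Let `C` be the set of vertices joined to `x₁` by a red path in `K_ℕ \ S` and `B` the rest of
`ℕ \ S`. Both are infinite: `C` contains the red neighbours of `x₁` outside `S`, and `B` those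
of `x₂`, since `x₂ ∉ C`. Every edge between `C` and `B` is blue, as a red one would enlarge `C`.
Alternating between the increasing enumerations of `C` and `B` gives a blue path whose vertex
set is the cofinite set `ℕ \ S`, which has upper density `1`.
-/

/-- The upper density of a set `A ⊆ ℕ`: `limsup_{n → ∞} |A ∩ {1, …, n}| / n`. -/
noncomputable def upperDensity (A : Set ℕ) : ℝ :=
  Filter.atTop.limsup fun n : ℕ => ((A ∩ Set.Icc 1 n).ncard : ℝ) / n

/-- A vertex `x` is red if it has infinitely many red neighbours in `K_ℕ`
(red edges are those with `c x y = true`). -/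
def IsRedVertex (c : ℕ → ℕ → Bool) (x : ℕ) : Prop :=
  {y : ℕ | y ≠ x ∧ c x y = true}.Infinite

open Filter

lemma ncard_inter_Icc_le (A : Set ℕ) (n : ℕ) : (A ∩ Set.Icc 1 n).ncard ≤ n := by
  simpa using Set.ncard_le_ncard Set.inter_subset_right (Set.finite_Icc 1 n)

lemma le_ncard_inter_Icc_add_ncard_compl {A : Set ℕ} (hA : Aᶜ.Finite) (n : ℕ) :
    n ≤ (A ∩ Set.Icc 1 n).ncard + Aᶜ.ncard := by
  calc n = (Set.Icc 1 n).ncard := by simp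
    _ ≤ (Set.Icc 1 n \ Aᶜ).ncard + Aᶜ.ncard := Set.ncard_le_ncard_sdiff_add_ncard _ _ hA
    _ = (A ∩ Set.Icc 1 n).ncard + Aᶜ.ncard := by rw [Set.sdiff_compl, Set.inter_comm]

lemma upperDensity_eq_one_of_finite_compl {A : Set ℕ} (hA : Aᶜ.Finite) :
    upperDensity A = 1 := by
  refine Tendsto.limsup_eq (tendsto_of_tendsto_of_tendsto_of_le_of_le'
    (g := fun n : ℕ => 1 - (Aᶜ.ncard : ℝ) / n) ?_ tendsto_const_nhds ?_ ?_)
  · simpa using tendsto_const_nhds.sub (tendsto_const_div_atTop_nhds_zero_nat (Aᶜ.ncard : ℝ))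
  · filter_upwards [eventually_gt_atTop 0] with n hn
    rw [sub_le_iff_le_add, ← add_div, le_div_iff₀ (by positivity), one_mul]
    exact_mod_cast le_ncard_inter_Icc_add_ncard_compl hA n
  · filter_upwards [eventually_gt_atTop 0] with n hn
    rw [div_le_one (by positivity)]
    exact_mod_cast ncard_inter_Icc_le A n

lemma exists_injective_alternating_of_infinite {A B : Set ℕ} (hA : A.Infinite) (hB : B.Infinite)
    (hAB : Disjoint A B) :
    ∃ v : ℕ → ℕ, Function.Injective v ∧ Set.range v = A ∪ B ∧
      ∀ i, v i ∈ A ∧ v (i + 1) ∈ B ∨ v i ∈ B ∧ v (i + 1) ∈ A := by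
  set a := Nat.nth (· ∈ A)
  set b := Nat.nth (· ∈ B)
  have ha : ∀ k, a k ∈ A := Nat.nth_mem_of_infinite hA
  have hb : ∀ k, b k ∈ B := Nat.nth_mem_of_infinite hB
  set v := Sum.elim a b ∘ Equiv.natSumNatEquivNat.symm
  have hv_even : ∀ k, v (2 * k) = a k := fun k => by simp [v]
  have hv_odd : ∀ k, v (2 * k + 1) = b k := fun k => by simp [v]
  refine ⟨v, ?_, ?_, fun i => ?_⟩
  · exact ((Nat.nth_injective hA).sumElim (Nat.nth_injective hB)
      fun i j h => hAB.ne_of_mem (ha i) (hb j) h).comp (Equiv.injective _)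
  · rw [EquivLike.range_comp, Set.Sum.elim_range]
    exact congrArg₂ (· ∪ ·) (Nat.range_nth_of_infinite hA) (Nat.range_nth_of_infinite hB)
  · obtain ⟨k, rfl | rfl⟩ := Nat.even_or_odd' i
    · exact .inl ⟨hv_even k ▸ ha k, hv_odd k ▸ hb k⟩
    · exact .inr ⟨hv_odd k ▸ hb k, show v (2 * (k + 1)) ∈ A from hv_even (k + 1) ▸ ha _⟩

def redGraph (c : ℕ → ℕ → Bool) (S : Finset ℕ) : SimpleGraph ℕ :=
  SimpleGraph.fromRel fun u v => u ∉ S ∧ v ∉ S ∧ c u v = true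

namespace redGraph

variable {c : ℕ → ℕ → Bool} {S : Finset ℕ} {x y a b : ℕ}

lemma notMem_of_reachable (h : (redGraph c S).Reachable x y) (hx : x ∉ S) : y ∉ S := by
  rw [SimpleGraph.reachable_iff_reflTransGen] at h
  cases h with
  | refl => exact hx
  | tail _ hadj => exact hadj.2.elim (·.2.1) (·.1)

lemma reachable_of_red (h : (redGraph c S).Reachable x a) (ha : a ∉ S) (hb : b ∉ S)
    (hab : c a b = true) : (redGraph c S).Reachable x b := by
  obtain rfl | hne := eq_or_ne a b
  · exact h
  · exact h.trans (SimpleGraph.Adj.reachable ⟨hne, .inl ⟨ha, hb, hab⟩⟩)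

lemma exists_red_path_of_reachable (hsymm : ∀ u v, c u v = c v u)
    (h : (redGraph c S).Reachable x y) (hy : y ∉ S) :
    ∃ (n : ℕ) (v : ℕ → ℕ), v 0 = x ∧ v n = y ∧ (∀ i ≤ n, v i ∉ S) ∧
      (∀ i ≤ n, ∀ j ≤ n, v i = v j → i = j) ∧ ∀ i < n, c (v i) (v (i + 1)) = true := by
  obtain ⟨p, hp⟩ := h.some.toPath
  have hred : ∀ i < p.length, p.getVert i ∉ S ∧ c (p.getVert i) (p.getVert (i + 1)) = true :=
    fun i hi => (p.adj_getVert_succ hi).2.elim (fun h => ⟨h.1, h.2.2⟩)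
      fun h => ⟨h.2.1, hsymm _ _ ▸ h.2.2⟩
  refine ⟨p.length, p.getVert, p.getVert_zero, p.getVert_length, fun i hi => ?_,
    fun i hi j hj => (hp.getVert_injOn hi hj ·), fun i hi => (hred i hi).2⟩
  obtain hi | rfl := hi.lt_or_eq
  · exact (hred i hi).1
  · rwa [p.getVert_length]

end redGraph

theorem non_joinable_red_vertices_give_dense_path_general
    (c : ℕ → ℕ → Bool) (hsymm : ∀ x y, c x y = c y x)
    (x₁ x₂ : ℕ) (hx₁ : IsRedVertex c x₁) (hx₂ : IsRedVertex c x₂)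
    (S : Finset ℕ) (hS₁ : x₁ ∉ S) (hS₂ : x₂ ∉ S)
    (hnopath : ¬ ∃ (n : ℕ) (v : ℕ → ℕ),
      v 0 = x₁ ∧ v n = x₂ ∧
      (∀ i ≤ n, v i ∉ S) ∧
      (∀ i ≤ n, ∀ j ≤ n, v i = v j → i = j) ∧
      (∀ i < n, c (v i) (v (i + 1)) = true)) :
    ∃ (v : ℕ → ℕ) (b : Bool), Function.Injective v ∧
      (∀ i, c (v i) (v (i + 1)) = b) ∧
      upperDensity (Set.range v) = 1 := by
  set C := {y | (redGraph c S).Reachable x₁ y}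
  set B := {y | y ∉ S} \ C
  have hCS : C ⊆ {y | y ∉ S} := fun a ha => redGraph.notMem_of_reachable ha hS₁
  have hx₂C : x₂ ∉ C := fun h => hnopath (redGraph.exists_red_path_of_reachable hsymm h hS₂)
  have hC : C.Infinite := by
    refine (hx₁.sdiff S.finite_toSet).mono ?_
    rintro y ⟨⟨-, hy⟩, hyS⟩
    exact redGraph.reachable_of_red (.refl x₁) hS₁ hyS hy
  have hB : B.Infinite := by
    refine (hx₂.sdiff S.finite_toSet).mono ?_
    rintro y ⟨⟨-, hy⟩, hyS⟩
    exact ⟨hyS, fun hyC => hx₂C (redGraph.reachable_of_red hyC hyS hS₂ (hsymm y x₂ ▸ hy))⟩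
  have hblue : ∀ a ∈ C, ∀ b ∈ B, c a b = false := fun a ha b ⟨hbS, hbC⟩ =>
    Bool.eq_false_iff.2 fun hab => hbC (redGraph.reachable_of_red ha (hCS ha) hbS hab)
  obtain ⟨v, hinj, hrange, halt⟩ :=
    exists_injective_alternating_of_infinite hC hB Set.disjoint_sdiff_right
  refine ⟨v, false, hinj, fun i => ?_, upperDensity_eq_one_of_finite_compl ?_⟩
  · rcases halt i with ⟨ha, hb⟩ | ⟨hb, ha⟩
    · exact hblue _ ha _ hb
    · exact hsymm _ _ ▸ hblue _ ha _ hb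
  · rw [hrange, Set.union_sdiff_cancel hCS]
    exact S.finite_toSet.subset fun y hy => not_not.1 hy

/-- Suppose `K_ℕ` is 2-edge-coloured and there are two red vertices `x₁ ≠ x₂` and a
finite set `S ⊆ ℕ \ {x₁, x₂}` such that `K_ℕ \ S` contains no red path joining `x₁`
and `x₂`. Then there is a monochromatic infinite path whose vertex set has upper
density equal to `1`. -/
theorem non_joinable_red_vertices_give_dense_path
    (c : ℕ → ℕ → Bool) (hsymm : ∀ x y, c x y = c y x)
    (x₁ x₂ : ℕ) (hx : x₁ ≠ x₂) (hx₁ : IsRedVertex c x₁) (hx₂ : IsRedVertex c x₂)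
    (S : Finset ℕ) (hS₁ : x₁ ∉ S) (hS₂ : x₂ ∉ S)
    (hnopath : ¬ ∃ (n : ℕ) (v : ℕ → ℕ),
      v 0 = x₁ ∧ v n = x₂ ∧
      (∀ i ≤ n, v i ∉ S) ∧
      (∀ i ≤ n, ∀ j ≤ n, v i = v j → i = j) ∧
      (∀ i < n, c (v i) (v (i + 1)) = true)) :
    ∃ (v : ℕ → ℕ) (b : Bool), Function.Injective v ∧
      (∀ i, c (v i) (v (i + 1)) = b) ∧
      upperDensity (Set.range v) = 1 :=
  non_joinable_red_vertices_give_dense_path_general c hsymm x₁ x₂ hx₁ hx₂ S hS₁ hS₂ hnopath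
end
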